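/- arXiv:1403.5952 — 2 statements merged into one kernel-verified Lean document; each statement's English description precedes it below -/
import Mathlib

section
/- (Unique reaching definition dominates) In a program where a fresh definition of v is placed at each node of P ∪ DF⁺(P) (with a definition at the entry node), the unique definition of each SSA version v_i of v dominates every program point in the live range of v_i. -/
/-!
Dominance by `d` is carried along an edge `x → y` as soon as `d` dominates `x` and `y ∉ DF(d)`:
this is precisely what the dominance frontier records. As `P ∪ DF⁺(P)` is closed under `DF`,
a path leaving a definition `d` that meets no further definition never enters `DF(d)`, so `d`
dominates every node along it.
-/

/-- A path in a directed graph `E` from `a` to `b`. -/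
def IsPath {V : Type*} (E : V → V → Prop) (l : List V) (a b : V) : Prop :=
  l.head? = some a ∧ l.getLast? = some b ∧ l.Chain' E

/-- Dominance w.r.t. the entry node. -/
def Dom {V : Type*} (E : V → V → Prop) (entry n n' : V) : Prop :=
  ∀ l, IsPath E l entry n' → n ∈ l

/-- The dominance frontier of a node. -/
def DF {V : Type*} (E : V → V → Prop) (entry n : V) : Set V :=
  {n' | (∃ q, E q n' ∧ Dom E entry n q) ∧ ¬(Dom E entry n n' ∧ n ≠ n')}

/-- The iterated dominance frontier `DF⁺(P)` of a set of nodes. -/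
def DFplusSet {V : Type*} (E : V → V → Prop) (entry : V) (P : Set V) : Set V :=
  ⋂₀ {S | (⋃ n ∈ P, DF E entry n) ⊆ S ∧ ∀ z ∈ S, DF E entry z ⊆ S}

section

variable {V : Type*} {E : V → V → Prop} {entry : V}

theorem IsPath.induction {Q : V → Prop} {l : List V} {a b : V} (hl : IsPath E l a b)
    (step : ∀ x y, E x y → y ∈ l.tail → Q x → Q y) (ha : Q a) : Q b := by
  obtain ⟨hhead, hlast, hchain⟩ := hl
  have hchain' : l.IsChain (fun x y => E x y ∧ y ∈ l.tail) :=
    hchain.imp_of_mem_tail_imp fun _ _ _ hy hxy => ⟨hxy, hy⟩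
  exact hchain'.induction Q l (fun x y hxy => step x y hxy.1 hxy.2)
    (fun hne => (List.head_eq_iff_head?_eq_some hne).mpr hhead ▸ ha) b
    (List.mem_of_mem_getLast? hlast)

theorem Dom.refl (d : V) : Dom E entry d d :=
  fun _ hl => List.mem_of_mem_getLast? hl.2.1

theorem Dom.of_edge {d x y : V} (hx : Dom E entry d x) (hxy : E x y)
    (hy : y ∉ DF E entry d) : Dom E entry d y := by
  by_contra h
  exact hy ⟨⟨x, hxy, hx⟩, fun h' => h h'.1⟩

theorem DF_subset_DFplusSet {P : Set V} {z : V} (hz : z ∈ P ∪ DFplusSet E entry P) :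
    DF E entry z ⊆ DFplusSet E entry P := by
  intro y hy S ⟨hPS, hclosed⟩
  rcases hz with hz | hz
  · exact hPS (Set.mem_biUnion hz hy)
  · exact hclosed z (hz S ⟨hPS, hclosed⟩) hy

theorem Dom.of_isPath_of_forall_notMem_DF {d p : V} {l : List V} (hl : IsPath E l d p)
    (hclean : ∀ x ∈ l.tail, x ∉ DF E entry d) : Dom E entry d p :=
  hl.induction (fun _ y hxy hy hx => hx.of_edge hxy (hclean y hy)) (Dom.refl d)

end

theorem stmt13_general {V : Type*} (E : V → V → Prop) (entry : V)
    (P : Set V)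
    (d p : V) (l : List V)
    (hd : d ∈ P ∪ DFplusSet E entry P)
    (hl : IsPath E l d p)
    (hclean : ∀ x ∈ l.drop 1, x ∉ P ∪ DFplusSet E entry P) :
    Dom E entry d p :=
  Dom.of_isPath_of_forall_notMem_DF hl fun x hx hxd =>
    hclean x (by rwa [List.drop_one]) (Or.inr (DF_subset_DFplusSet hd hxd))

/-- Unique reaching definition dominates: if fresh definitions of `v` are
placed at every node of `D = P ∪ DF⁺(P)` (with a definition at the entry node,
`entry ∈ P`), then the definition of each SSA version dominates every program
point it reaches without intervening redefinition — in particular every point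
of its live range. -/
theorem stmt13 {V : Type*} (E : V → V → Prop) (entry : V)
    (P : Set V) (hentry : entry ∈ P)
    (d p : V) (l : List V)
    (hd : d ∈ P ∪ DFplusSet E entry P)
    (hl : IsPath E l d p)
    (hclean : ∀ x ∈ l.drop 1, x ∉ P ∪ DFplusSet E entry P) :
    Dom E entry d p :=
  stmt13_general E entry P d p l hd hl hclean
end

section
/- (Equivalence SSI/SEG for partitioned variable problems) Let G be a CFG, v a variable, and SEG the forward sparse evaluation graph of Choi et al. for v, with node set built from the entry node, all nodes with non-identity transfer functions (call this set P), and the iterated dominance frontier DF⁺(P), with edges given by immediate dominance among these nodes. Then applying the live range splitting strategy P↓ to the program augmented with a pseudo-definition of v at the entry, a pseudo-use at the exit, and a pseudo-use at each definition of v, yields a program representation whose SSA definitions, live ranges, and def-use chains are respectively in bijection with the nodes of SEG, the mapping function M of SEG, and the edges of SEG. -/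
/-- The SSA definition placed at `q ∈ S` reaches the exit of node `u`: there is
a path from `q` to `u` crossing no other definition site of `S`. -/
def ReachDef {V : Type*} (E : V → V → Prop) (S : Set V) (q u : V) : Prop :=
  q ∈ S ∧ ∃ l, IsPath E l q u ∧ ∀ x ∈ l.drop 1, x ∉ S

/-- `q` is the nearest dominator of `u` among the nodes of `S`. -/
def NearestSDom {V : Type*} (E : V → V → Prop) (entry : V) (S : Set V)
    (q u : V) : Prop :=
  q ∈ S ∧ Dom E entry q u ∧ ∀ r ∈ S, Dom E entry r u → Dom E entry r q


section

variable {V : Type*} {E : V → V → Prop} {entry : V}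

section Paths

theorem isPath_singleton_iff {x a b : V} : IsPath E [x] a b ↔ x = a ∧ x = b :=
  ⟨fun h => by simpa using And.intro h.1 h.2.1,
    fun ⟨ha, hb⟩ => ⟨by simp [ha], by simp [hb], List.isChain_singleton x⟩⟩

theorem isPath_cons_cons_iff {x y a b : V} {t : List V} :
    IsPath E (x :: y :: t) a b ↔ x = a ∧ E x y ∧ IsPath E (y :: t) y b := by
  simp only [IsPath, List.head?_cons, Option.some.injEq, List.getLast?_cons_cons, true_and]
  constructor
  · rintro ⟨ha, hb, hc⟩
    exact ⟨ha, (List.isChain_cons_cons.1 hc).1, hb, (List.isChain_cons_cons.1 hc).2⟩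
  · rintro ⟨ha, hxy, hb, hc⟩
    exact ⟨ha, hb, List.isChain_cons_cons.2 ⟨hxy, hc⟩⟩

theorem IsPath.cons {m : List V} {x y b : V} (h : IsPath E (y :: m) y b) (hxy : E x y) :
    IsPath E (x :: y :: m) x b :=
  isPath_cons_cons_iff.2 ⟨rfl, hxy, h⟩

theorem IsPath.exists_eq_cons {l : List V} {a b : V} (h : IsPath E l a b) :
    ∃ t, l = a :: t := by
  obtain ⟨h, -⟩ := h
  cases l <;> simp_all

theorem IsPath.append {l m : List V} {a b c : V} (hl : IsPath E l a b)
    (hm : IsPath E (b :: m) b c) : IsPath E (l ++ m) a c := by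
  induction l generalizing a with
  | nil => simp [IsPath] at hl
  | cons x t ih =>
    cases t with
    | nil => obtain ⟨rfl, rfl⟩ := isPath_singleton_iff.1 hl; exact hm
    | cons y t =>
      obtain ⟨rfl, hxy, hyt⟩ := isPath_cons_cons_iff.1 hl
      exact (ih hyt).cons hxy

theorem IsPath.prefix {l₁ l₂ : List V} {a b c : V} (h : IsPath E (l₁ ++ c :: l₂) a b) :
    IsPath E (l₁ ++ [c]) a c := by
  refine ⟨?_, by simp, h.2.2.prefix ⟨l₂, by simp⟩⟩
  cases l₁ <;> simpa using h.1

theorem IsPath.exists_pred {l : List V} {a b : V} (h : IsPath E l a b) (hab : a ≠ b) :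
    ∃ u, E u b := by
  induction l generalizing a with
  | nil => simp [IsPath] at h
  | cons x t ih =>
    cases t with
    | nil => exact absurd (isPath_singleton_iff.1 h) (by rintro ⟨rfl, rfl⟩; exact hab rfl)
    | cons y t =>
      obtain ⟨rfl, hxy, hyt⟩ := isPath_cons_cons_iff.1 h
      by_cases hyb : y = b
      · exact ⟨x, hyb ▸ hxy⟩
      · exact ih hyt hyb

theorem IsPath.exists_notMem_dropLast {l : List V} {a b : V} (h : IsPath E l a b) :
    ∃ l', IsPath E l' a b ∧ b ∉ l'.dropLast := by
  induction l generalizing a with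
  | nil => simp [IsPath] at h
  | cons x t ih =>
    by_cases hxb : x = b
    · obtain ⟨rfl⟩ : x = a := by simpa [IsPath] using h.1
      exact ⟨[x], isPath_singleton_iff.2 ⟨rfl, hxb⟩, by simp⟩
    cases t with
    | nil => exact absurd (isPath_singleton_iff.1 h).2 hxb
    | cons y t =>
      obtain ⟨rfl, hxy, hyt⟩ := isPath_cons_cons_iff.1 h
      obtain ⟨l', hl', hb⟩ := ih hyt
      obtain ⟨t', rfl⟩ := hl'.exists_eq_cons
      exact ⟨x :: y :: t', hl'.cons hxy, by simp_all [Ne.symm hxb]⟩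

end Paths

section Dominance

theorem dom_refl (E : V → V → Prop) (entry q : V) : Dom E entry q q :=
  fun _ hl => List.mem_of_mem_getLast? hl.2.1

theorem Dom.eq_entry {q : V} (h : Dom E entry q entry) : q = entry := by
  simpa using h [entry] (isPath_singleton_iff.2 ⟨rfl, rfl⟩)

/-- Cut a path to `x` that meets `x` only at its end at an occurrence of `q`: the prefix reaches `q`
without passing through `x`. -/
theorem Dom.antisymm (hreach : ∀ v, ∃ l, IsPath E l entry v) {q x : V}
    (hqx : Dom E entry q x) (hxq : Dom E entry x q) : q = x := by
  by_contra hne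
  obtain ⟨l₀, hl₀⟩ := hreach x
  obtain ⟨l, hl, hx⟩ := hl₀.exists_notMem_dropLast
  have hl_eq : l = l.dropLast ++ [x] := (List.dropLast_append_getLast? _ hl.2.1).symm
  have hq : q ∈ l.dropLast := by
    have := hqx l hl
    rw [hl_eq] at this
    simpa [hne] using this
  obtain ⟨l₁, l₂, hsplit⟩ := List.append_of_mem hq
  have hpre : IsPath E (l₁ ++ [q]) entry q := by
    rw [hl_eq, hsplit, List.append_assoc, List.cons_append] at hl
    exact hl.prefix
  have : x ∈ l₁ := by simpa [Ne.symm hne] using hxq _ hpre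
  exact hx (hsplit ▸ List.mem_append_left _ this)

end Dominance

section ClosedUnderDF

def DFClosed (E : V → V → Prop) (entry : V) (S : Set V) : Prop :=
  ∀ r ∈ S, DF E entry r ⊆ S

theorem df_subset_dfPlusSet {P : Set V} {q : V} (hq : q ∈ P ∪ DFplusSet E entry P) :
    DF E entry q ⊆ DFplusSet E entry P := by
  rcases hq with hq | hq
  · exact fun y hy T hT => hT.1 (Set.mem_biUnion hq hy)
  · exact fun y hy T hT => hT.2 q (hq T hT) hy

theorem dfClosed_union_dfPlusSet (P : Set V) :
    DFClosed E entry (P ∪ DFplusSet E entry P) :=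
  fun _ hr => (df_subset_dfPlusSet hr).trans Set.subset_union_right

variable {S : Set V}

theorem DFClosed.dom_of_isPath (hS : DFClosed E entry S) {q : V} (hq : q ∈ S) {l : List V}
    {a b : V} (hl : IsPath E l a b) (ha : Dom E entry q a) (hfree : ∀ x ∈ l.drop 1, x ∉ S) :
    Dom E entry q b := by
  induction l generalizing a with
  | nil => simp [IsPath] at hl
  | cons x t ih =>
    cases t with
    | nil =>
      obtain ⟨rfl, rfl⟩ := isPath_singleton_iff.1 hl
      exact ha
    | cons y t =>
      obtain ⟨rfl, hxy, hyt⟩ := isPath_cons_cons_iff.1 hl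
      have hy : Dom E entry q y := by
        by_contra hy
        exact hfree y (by simp) (hS q hq ⟨⟨x, hxy, ha⟩, fun h => hy h.1⟩)
      exact ih hyt hy fun z hz => hfree z (List.mem_of_mem_tail hz)

theorem DFClosed.dom_of_reachDef (hS : DFClosed E entry S) {q u : V} (h : ReachDef E S q u) :
    Dom E entry q u :=
  let ⟨hq, _, hl, hfree⟩ := h
  hS.dom_of_isPath hq hl (dom_refl E entry q) hfree

end ClosedUnderDF

section ReachingDefinitions

variable {S : Set V}

theorem exists_reachDef_of_isPath {l : List V} {a b : V} (hl : IsPath E l a b)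
    (hS : ∃ x ∈ l, x ∈ S) : ∃ q, ReachDef E S q b := by
  induction l generalizing a with
  | nil => simp [IsPath] at hl
  | cons x t ih =>
    cases t with
    | nil =>
      obtain ⟨rfl, rfl⟩ := isPath_singleton_iff.1 hl
      exact ⟨x, by simpa using hS, [x], hl, by simp⟩
    | cons y t =>
      obtain ⟨rfl, -, hyt⟩ := isPath_cons_cons_iff.1 hl
      by_cases hfree : ∀ z ∈ y :: t, z ∉ S
      · obtain ⟨z, hz, hzS⟩ := hS
        obtain rfl : z = x := (List.mem_cons.1 hz).resolve_right (hfree z · hzS)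
        exact ⟨z, hzS, _, hl, hfree⟩
      · exact ih hyt (by simpa [or_iff_not_imp_left] using hfree)

theorem exists_reachDef (hreach : ∀ v, ∃ l, IsPath E l entry v) (hentry : entry ∈ S) (u : V) :
    ∃ q, ReachDef E S q u :=
  let ⟨_, hl⟩ := hreach u
  exists_reachDef_of_isPath hl ⟨entry, List.mem_of_mem_head? hl.1, hentry⟩

theorem ReachDef.nearestSDom (hS : DFClosed E entry S) {q u : V} (h : ReachDef E S q u) :
    NearestSDom E entry S q u := by
  refine ⟨h.1, hS.dom_of_reachDef h, fun r hr hru m hm => ?_⟩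
  obtain ⟨-, l, hl, hfree⟩ := h
  obtain ⟨t, rfl⟩ := hl.exists_eq_cons
  rcases List.mem_append.1 (hru _ (hm.append hl)) with hrm | hrt
  · exact hrm
  · exact absurd hr (hfree r hrt)

theorem NearestSDom.unique (hreach : ∀ v, ∃ l, IsPath E l entry v) {q q' u : V}
    (h : NearestSDom E entry S q u) (h' : NearestSDom E entry S q' u) : q = q' :=
  (h'.2.2 q h.1 h.2.1).antisymm hreach (h.2.2 q' h'.1 h'.2.1)

theorem reachDef_iff_nearestSDom (hreach : ∀ v, ∃ l, IsPath E l entry v)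
    (hS : DFClosed E entry S) (hentry : entry ∈ S) {q u : V} :
    ReachDef E S q u ↔ NearestSDom E entry S q u := by
  refine ⟨fun h => h.nearestSDom hS, fun h => ?_⟩
  obtain ⟨x, hx⟩ := exists_reachDef hreach hentry u
  rwa [h.unique hreach (hx.nearestSDom hS)]

end ReachingDefinitions

section ImmediateDominators

variable {S : Set V}

def IsImmSDom (E : V → V → Prop) (entry : V) (S : Set V) (q w : V) : Prop :=
  q ∈ S ∧ q ≠ w ∧ Dom E entry q w ∧ ∀ r ∈ S, Dom E entry r w → r ≠ w → Dom E entry r q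

theorem IsImmSDom.unique (hreach : ∀ v, ∃ l, IsPath E l entry v) {q q' w : V}
    (h : IsImmSDom E entry S q w) (h' : IsImmSDom E entry S q' w) : q = q' :=
  (h'.2.2.2 q h.1 h.2.2.1 h.2.1).antisymm hreach (h.2.2.2 q' h'.1 h'.2.2.1 h'.2.1)

/-- A definition reaching the end of a predecessor `u` of `w ∉ DF(S)` dominates `w` (otherwise
`w ∈ DF(q)`), and any `S`-dominator of `w` other than `w` lies on every path to `q`, since the
`S`-free path from `q` to `u` cannot contain it. -/
theorem ReachDef.isImmSDom_of_edge (hS : DFClosed E entry S) {w : V}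
    (hw : ∀ r ∈ S, w ∉ DF E entry r) {q u : V} (huw : E u w) (h : ReachDef E S q u) :
    IsImmSDom E entry S q w := by
  have hqu := hS.dom_of_reachDef h
  obtain ⟨hq, l, hl, hfree⟩ := h
  have hqw : Dom E entry q w ∧ q ≠ w := by
    by_contra hqw
    exact hw q hq ⟨⟨u, huw, hqu⟩, hqw⟩
  refine ⟨hq, hqw.2, hqw.1, fun r hr hrw hrw' m hm => ?_⟩
  obtain ⟨t, rfl⟩ := hl.exists_eq_cons
  have hpath : IsPath E (m ++ t ++ [w]) entry w :=
    (hm.append hl).append (isPath_cons_cons_iff.2 ⟨rfl, huw, isPath_singleton_iff.2 ⟨rfl, rfl⟩⟩)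
  rcases List.mem_append.1 (hrw _ hpath) with hr' | hr'
  · rcases List.mem_append.1 hr' with hrm | hrt
    · exact hrm
    · exact absurd hr (hfree r hrt)
  · exact absurd (List.mem_singleton.1 hr') hrw'

theorem exists_edge_reachDef_iff_isImmSDom (hreach : ∀ v, ∃ l, IsPath E l entry v)
    (hS : DFClosed E entry S) (hentry : entry ∈ S) {w : V} (hw : ∀ r ∈ S, w ∉ DF E entry r)
    {q : V} : (∃ u, E u w ∧ ReachDef E S q u) ↔ IsImmSDom E entry S q w := by
  refine ⟨fun ⟨u, huw, h⟩ => h.isImmSDom_of_edge hS hw huw, fun h => ?_⟩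
  have hw_entry : entry ≠ w := by
    rintro rfl
    exact h.2.1 h.2.2.1.eq_entry
  obtain ⟨l, hl⟩ := hreach w
  obtain ⟨u, huw⟩ := hl.exists_pred hw_entry
  obtain ⟨x, hx⟩ := exists_reachDef hreach hentry u
  rw [h.unique hreach (hx.isImmSDom_of_edge hS hw huw)]
  exact ⟨u, huw, hx⟩

end ImmediateDominators

end

/-- Equivalence SSI/SEG for partitioned variable problems.  Let `P` be the set
of nodes with non-identity transfer functions together with the entry (which
carries a pseudo-definition of `v`), `M = DF⁺(P)` the meet nodes of the sparse
evaluation graph, and `S = P ∪ M` the SEG nodes / SSA definition sites produced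
by the live range splitting strategy `P↓`.  Then: (1) every node `u` is in the
live range of exactly one SSA version (defined at the unique `q` with
`ReachDef q u`); (2) that version is the nearest `S`-dominator of `u`, matching
the SEG mapping function `M`; (3) the def-use chain feeding the pseudo-use at a
non-meet node `w ∈ P` comes from the immediate strict `S`-dominator of `w`,
matching the SEG edges `(n_q, n_p)`; and (4) the def-use chains feeding a meet
node `w ∈ M` come from the nearest `S`-dominators of the CFG predecessors of
`w`, matching the SEG edges `(n_q, n_m)`. -/
theorem stmt15 {V : Type*} (E : V → V → Prop) (entry : V)
    (hreach : ∀ v, ∃ l, IsPath E l entry v)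
    (P : Set V) (hentry : entry ∈ P) :
    (∀ u, ∃! q, ReachDef E (P ∪ DFplusSet E entry P) q u) ∧
    (∀ u q, ReachDef E (P ∪ DFplusSet E entry P) q u ↔
      NearestSDom E entry (P ∪ DFplusSet E entry P) q u) ∧
    (∀ w ∈ P, w ∉ DFplusSet E entry P → ∀ q,
      (∃ u, E u w ∧ ReachDef E (P ∪ DFplusSet E entry P) q u) ↔
      (q ∈ P ∪ DFplusSet E entry P ∧ q ≠ w ∧ Dom E entry q w ∧
        ∀ r ∈ P ∪ DFplusSet E entry P, Dom E entry r w → r ≠ w →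
          Dom E entry r q)) ∧
    (∀ w ∈ DFplusSet E entry P, ∀ q,
      (∃ u, E u w ∧ ReachDef E (P ∪ DFplusSet E entry P) q u) ↔
      (∃ u, E u w ∧ NearestSDom E entry (P ∪ DFplusSet E entry P) q u)) := by
  have hS := dfClosed_union_dfPlusSet (E := E) (entry := entry) P
  have hentry' : entry ∈ P ∪ DFplusSet E entry P := Or.inl hentry
  have hnearest := fun {q u} => reachDef_iff_nearestSDom hreach hS hentry' (q := q) (u := u)
  refine ⟨fun u => ?_, fun _ _ => hnearest, fun w _ hw _ => ?_,
    fun _ _ _ => exists_congr fun _ => and_congr_right fun _ => hnearest⟩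
  · obtain ⟨q, hq⟩ := exists_reachDef hreach hentry' u
    exact ⟨q, hq, fun q' hq' => (hnearest.1 hq').unique hreach (hnearest.1 hq)⟩
  · exact exists_edge_reachDef_iff_isImmSDom hreach hS hentry'
      fun r hr hwr => hw (df_subset_dfPlusSet hr hwr)
end
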